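/- arXiv:2412.00595 — 9 statements merged into one kernel-verified Lean document; each statement's English description precedes it below -/
import Mathlib

section
/- Let B be a unital associative complex algebra, ε : B → ℂ a unital algebra homomorphism, and φ : B → ℂ a linear functional. Then the following are equivalent: (1) φ(1) = 0 and φ(abc) = 0 for all a, b, c ∈ ker ε; (2) for all a, b, c ∈ B one has φ(abc) = φ(ab)ε(c) + φ(ac)ε(b) + φ(bc)ε(a) − φ(a)ε(bc) − φ(b)ε(ac) − φ(c)ε(ab). -/
/-- For a unital associative complex algebra `B` with a character
`ε : B → ℂ` and a linear functional `φ : B → ℂ`, the following are equivalent: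
(1) `φ 1 = 0` and `φ` vanishes on products of three elements of `ker ε`;
(2) the Gaussian product formula holds for all triples. -/
theorem stmt_0 {B : Type*} [Ring B] [Algebra ℂ B]
    (ε : B →ₐ[ℂ] ℂ) (φ : B →ₗ[ℂ] ℂ) :
    (φ 1 = 0 ∧ ∀ a b c : B, ε a = 0 → ε b = 0 → ε c = 0 → φ (a * b * c) = 0) ↔
    (∀ a b c : B,
      φ (a * b * c) =
        φ (a * b) * ε c + φ (a * c) * ε b + φ (b * c) * ε a
          - φ a * ε (b * c) - φ b * ε (a * c) - φ c * ε (a * b)) := by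
  constructor
  · rintro ⟨h1, h2⟩ a b c
    set A := a - algebraMap ℂ B (ε a) with hA
    set Bb := b - algebraMap ℂ B (ε b) with hB
    set C := c - algebraMap ℂ B (ε c) with hC
    have hεA : ε A = 0 := by simp [hA]
    have hεB : ε Bb = 0 := by simp [hB]
    have hεC : ε C = 0 := by simp [hC]
    have key := h2 A Bb C hεA hεB hεC
    have expand : A * Bb * C = a * b * c
        - ε c • (a * b) - ε b • (a * c) - ε a • (b * c)
        + (ε b * ε c) • a + (ε a * ε c) • b + (ε a * ε b) • c
        - (ε a * ε b * ε c) • (1 : B) := by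
      simp only [hA, hB, hC, Algebra.algebraMap_eq_smul_one, sub_mul, mul_sub,
        smul_mul_assoc, mul_smul_comm, one_mul, mul_one, smul_smul]
      module
    rw [expand] at key
    simp only [map_add, map_sub, map_smul, smul_eq_mul, h1, mul_zero] at key
    have hbc : ε (b * c) = ε b * ε c := map_mul ε b c
    have hac : ε (a * c) = ε a * ε c := map_mul ε a c
    have hab : ε (a * b) = ε a * ε b := map_mul ε a b
    rw [hbc, hac, hab]
    linear_combination key
  · intro h
    constructor
    · have := h 1 1 1
      simp at this
      exact this
    · intro a b c ha hb hc
      have := h a b c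
      simp [ha, hb, hc, this]
end

section
/- Let (B, ε) be an augmented algebra, D a complex inner product space, and (φ, η) a Gaussian pair on B with cocycle η : B → D. Then for a linear functional ψ : B → ℂ, the pair (ψ, η) is a Gaussian pair if and only if ψ − φ is a drift, i.e. ψ − φ is hermitian and satisfies (ψ−φ)(ab) = ε(a)(ψ−φ)(b) + (ψ−φ)(a)ε(b) for all a, b ∈ B. -/
open scoped ComplexOrder InnerProductSpace

/-- A Gaussian generating functional on an augmented `*`-algebra `(B, ε)`:
normalized, hermitian, conditionally positive and vanishing on `(ker ε)³`. -/
def IsGaussianGenFun {B : Type*} [Ring B] [Algebra ℂ B] [StarRing B]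
    (ε : B →ₐ[ℂ] ℂ) (φ : B →ₗ[ℂ] ℂ) : Prop :=
  φ 1 = 0 ∧ (∀ b : B, φ (star b) = starRingEnd ℂ (φ b)) ∧
  (∀ b : B, ε b = 0 → 0 ≤ φ (star b * b)) ∧
  (∀ a b c : B, ε a = 0 → ε b = 0 → ε c = 0 → φ (a * b * c) = 0)

/-- If `(φ, η)` is a Gaussian pair on `(B, ε)` with cocycle `η : B → D`,
then for a linear functional `ψ`, the pair `(ψ, η)` is a Gaussian pair if and only if
`ψ − φ` is a drift (a hermitian `ε`-derivation). -/
theorem stmt_2 {B D : Type*} [Ring B] [Algebra ℂ B] [StarRing B] [StarModule ℂ B]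
    [NormedAddCommGroup D] [InnerProductSpace ℂ D]
    (ε : B →ₐ[ℂ] ℂ) (hε : ∀ b : B, ε (star b) = starRingEnd ℂ (ε b))
    (φ : B →ₗ[ℂ] ℂ) (η : B →ₗ[ℂ] D)
    (hφ : IsGaussianGenFun ε φ)
    (hη : ∀ a b : B, η (a * b) = ε a • η b + ε b • η a)
    (hpair : ∀ a b : B,
      φ (star a * b) - ε (star a) * φ b - φ (star a) * ε b = ⟪η a, η b⟫_ℂ)
    (ψ : B →ₗ[ℂ] ℂ) :
    (IsGaussianGenFun ε ψ ∧
      ∀ a b : B,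
        ψ (star a * b) - ε (star a) * ψ b - ψ (star a) * ε b = ⟪η a, η b⟫_ℂ) ↔
    ((∀ b : B, (ψ - φ) (star b) = starRingEnd ℂ ((ψ - φ) b)) ∧
      (∀ a b : B, (ψ - φ) (a * b) = ε a * (ψ - φ) b + (ψ - φ) a * ε b)) := by

  obtain ⟨hφ1, hφstar, hφpos, hφ3⟩ := hφ
  constructor
  · rintro ⟨⟨hψ1, hψstar, hψpos, hψ3⟩, hψpair⟩
    constructor
    · intro b
      simp only [LinearMap.sub_apply, hψstar, hφstar, map_sub]
    · intro a b
      have h1 := hψpair (star a) b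
      have h2 := hpair (star a) b
      rw [star_star] at h1 h2
      simp only [LinearMap.sub_apply]
      linear_combination h1 - h2
  · rintro ⟨hds, hdd⟩
    simp only [LinearMap.sub_apply] at hds hdd
    have hδ1 : ψ 1 - φ 1 = 0 := by
      have h := hdd 1 1
      simp only [one_mul, map_one] at h
      linear_combination -h
    have hpairψ : ∀ a b : B,
        ψ (star a * b) - ε (star a) * ψ b - ψ (star a) * ε b = ⟪η a, η b⟫_ℂ := by
      intro a b
      have h := hdd (star a) b
      linear_combination hpair a b + h
    refine ⟨⟨?_, ?_, ?_, ?_⟩, hpairψ⟩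
    · linear_combination hδ1 + hφ1
    · intro b
      have := hds b
      simp only [map_sub] at this
      rw [hφstar] at this
      linear_combination this
    · intro b hb
      have h := hdd (star b) b
      rw [hε, hb] at h
      simp only [map_zero, mul_zero, zero_mul, add_zero] at h
      have : ψ (star b * b) = φ (star b * b) := by linear_combination h
      rw [this]; exact hφpos b hb
    · intro a b c ha hb hc
      have h := hdd (a * b) c
      rw [show ε (a * b) = ε a * ε b from map_mul ε a b, ha, hc] at h
      simp only [zero_mul, mul_zero, add_zero] at h
      have : ψ (a * b * c) = φ (a * b * c) := by linear_combination h
      rw [this]; exact hφ3 a b c ha hb hc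
end

section
/- Let (B, ε) be an augmented algebra, φ : B → ℂ a hermitian linear functional (φ(b*) = conj(φ(b)) for all b), D a complex inner product space, and η : B → D a Gaussian cocycle such that φ(ab) − ε(a)φ(b) − φ(a)ε(b) = ⟨η(a*), η(b)⟩ for all a, b ∈ B. Then φ is a Gaussian generating functional: φ(1) = 0, φ(b*b) ≥ 0 for all b ∈ ker ε, and φ(abc) = 0 for all a, b, c ∈ ker ε. -/
open scoped ComplexOrder InnerProductSpace

/-- (ii) ⇒ (i) of Schürmann's characterization: if `φ` is a hermitian
linear functional on an augmented algebra `(B, ε)` and `η : B → D` is a Gaussian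
cocycle into a complex inner product space with
`φ(ab) − ε(a)φ(b) − φ(a)ε(b) = ⟨η(a*), η(b)⟩` for all `a, b`, then `φ` is a Gaussian
generating functional: `φ 1 = 0`, `φ(b* b) ≥ 0` for `b ∈ ker ε`, and `φ` vanishes on
products of three elements of `ker ε`. -/
theorem stmt_3 {B D : Type*} [Ring B] [Algebra ℂ B] [StarRing B] [StarModule ℂ B]
    [NormedAddCommGroup D] [InnerProductSpace ℂ D]
    (ε : B →ₐ[ℂ] ℂ) (hε : ∀ b : B, ε (star b) = starRingEnd ℂ (ε b))
    (φ : B →ₗ[ℂ] ℂ) (hherm : ∀ b : B, φ (star b) = starRingEnd ℂ (φ b))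
    (η : B →ₗ[ℂ] D) (hη : ∀ a b : B, η (a * b) = ε a • η b + ε b • η a)
    (hrel : ∀ a b : B, φ (a * b) - ε a * φ b - φ a * ε b = ⟪η (star a), η b⟫_ℂ) :
    φ 1 = 0 ∧
    (∀ b : B, ε b = 0 → 0 ≤ φ (star b * b)) ∧
    (∀ a b c : B, ε a = 0 → ε b = 0 → ε c = 0 → φ (a * b * c) = 0) := by
  have hη1 : η 1 = 0 := by
    have h := hη 1 1
    simp only [mul_one, map_one, one_smul] at h
    have h2 : η 1 + η 1 = η 1 + 0 := by rw [add_zero, ← h]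
    exact add_left_cancel h2
  have hφ1 : φ 1 = 0 := by
    have h := hrel 1 1
    simp only [mul_one, map_one, one_mul, hη1, inner_zero_right] at h
    linear_combination -h
  refine ⟨hφ1, ?_, ?_⟩
  · intro b hb
    have h := hrel (star b) b
    rw [hε b, hb, star_star] at h
    simp only [map_zero, mul_zero, zero_mul, sub_zero] at h
    rw [h, @inner_self_eq_norm_sq_to_K ℂ]
    positivity
  · intro a b c ha hb hc
    have hab : η (star b * star a) = 0 := by
      rw [hη (star b) (star a), hε, hε, ha, hb]
      simp
    have h := hrel (a * b) c
    rw [map_mul ε, ha, hb, hc, star_mul, hab] at h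
    simpa using h
end

section
/- Let (B, ε) be an augmented algebra and φ : B → ℂ a Gaussian generating functional. Suppose given finite families X = {a₁, …, aₙ} ⊆ B and Y = {b₁, …, b_m} ⊆ ker ε such that (1) X generates B as a (unital) algebra, and (2) φ(b_k) = φ(a_j b_k) = φ(b_k a_j) = 0 for all 1 ≤ j ≤ n and 1 ≤ k ≤ m. Then φ vanishes on the two-sided ideal of B generated by Y. -/
open scoped ComplexOrder

private lemma decompL {B : Type*} [Ring B] [Algebra ℂ B] (ε : B →ₐ[ℂ] ℂ) (x z : B) :
    x * z = (x - algebraMap ℂ B (ε x)) * z + ε x • z := by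
  rw [sub_mul, Algebra.smul_def]; abel

private lemma decompR {B : Type*} [Ring B] [Algebra ℂ B] (ε : B →ₐ[ℂ] ℂ) (x z : B) :
    z * x = z * (x - algebraMap ℂ B (ε x)) + ε x • z := by
  rw [mul_sub, Algebra.smul_def, ← Algebra.commutes]; abel

/-- Let `φ` be a Gaussian generating functional on an augmented algebra
`(B, ε)`. If `X = {a₁, …, aₙ}` generates `B` as a unital algebra, `Y = {b₁, …, b_m}`
is contained in `ker ε`, and `φ(b_k) = φ(a_j b_k) = φ(b_k a_j) = 0` for all `j, k`,
then `φ` vanishes on the two-sided ideal of `B` generated by `Y`. -/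
theorem stmt_6 {B : Type*} [Ring B] [Algebra ℂ B] [StarRing B]
    (ε : B →ₐ[ℂ] ℂ) (φ : B →ₗ[ℂ] ℂ)
    (hφ1 : φ 1 = 0)
    (hφherm : ∀ b : B, φ (star b) = starRingEnd ℂ (φ b))
    (hφpos : ∀ b : B, ε b = 0 → 0 ≤ φ (star b * b))
    (hφgauss : ∀ a b c : B, ε a = 0 → ε b = 0 → ε c = 0 → φ (a * b * c) = 0)
    {n m : ℕ} (a : Fin n → B) (b : Fin m → B)
    (hY : ∀ k, ε (b k) = 0)
    (hgen : Algebra.adjoin ℂ (Set.range a) = ⊤)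
    (hb0 : ∀ k, φ (b k) = 0)
    (hab : ∀ j k, φ (a j * b k) = 0)
    (hba : ∀ j k, φ (b k * a j) = 0) :
    ∀ x ∈ TwoSidedIdeal.span (Set.range b), φ x = 0 := by
  have hεsub : ∀ x : B, ε (x - algebraMap ℂ B (ε x)) = 0 := by intro x; simp
  -- φ vanishes on c * b k for every c
  have key_right : ∀ (c : B) (k : Fin m), φ (c * b k) = 0 := by
    have H : ∀ c ∈ Algebra.adjoin ℂ (Set.range a), ∀ k, φ (c * b k) = 0 := by
      intro c hc
      induction hc using Algebra.adjoin_induction with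
      | mem x hx => obtain ⟨j, rfl⟩ := hx; exact fun k => hab j k
      | algebraMap r =>
        intro k
        rw [Algebra.algebraMap_eq_smul_one, smul_mul_assoc, map_smul, one_mul, hb0 k, smul_zero]
      | add x y hx hy ihx ihy =>
        intro k
        rw [add_mul, map_add, ihx k, ihy k, add_zero]
      | mul x y hx hy ihx ihy =>
        intro k
        have hx0 : φ ((x - algebraMap ℂ B (ε x)) * b k) = 0 := by
          rw [sub_mul, map_sub, ihx k, Algebra.algebraMap_eq_smul_one, smul_mul_assoc,
            map_smul, one_mul, hb0 k, smul_zero, sub_zero]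
        have hy0 : φ ((y - algebraMap ℂ B (ε y)) * b k) = 0 := by
          rw [sub_mul, map_sub, ihy k, Algebra.algebraMap_eq_smul_one, smul_mul_assoc,
            map_smul, one_mul, hb0 k, smul_zero, sub_zero]
        have hg : φ ((x - algebraMap ℂ B (ε x)) * ((y - algebraMap ℂ B (ε y)) * b k)) = 0 := by
          rw [← mul_assoc]; exact hφgauss _ _ _ (hεsub x) (hεsub y) (hY k)
        rw [mul_assoc, decompL ε x (y * b k), decompL ε y (b k), mul_add, mul_smul_comm]
        simp [hg, hx0, hy0, hb0 k]
    intro c k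
    exact H c (by rw [hgen]; trivial) k
  -- φ vanishes on b k * c for every c
  have key_left : ∀ (c : B) (k : Fin m), φ (b k * c) = 0 := by
    have H : ∀ c ∈ Algebra.adjoin ℂ (Set.range a), ∀ k, φ (b k * c) = 0 := by
      intro c hc
      induction hc using Algebra.adjoin_induction with
      | mem x hx => obtain ⟨j, rfl⟩ := hx; exact fun k => hba j k
      | algebraMap r =>
        intro k
        rw [Algebra.algebraMap_eq_smul_one, mul_smul_comm, map_smul, mul_one, hb0 k, smul_zero]
      | add x y hx hy ihx ihy =>
        intro k
        rw [mul_add, map_add, ihx k, ihy k, add_zero]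
      | mul x y hx hy ihx ihy =>
        intro k
        have hx0 : φ (b k * (x - algebraMap ℂ B (ε x))) = 0 := by
          rw [mul_sub, map_sub, ihx k, Algebra.algebraMap_eq_smul_one, mul_smul_comm,
            map_smul, mul_one, hb0 k, smul_zero, sub_zero]
        have hy0 : φ (b k * (y - algebraMap ℂ B (ε y))) = 0 := by
          rw [mul_sub, map_sub, ihy k, Algebra.algebraMap_eq_smul_one, mul_smul_comm,
            map_smul, mul_one, hb0 k, smul_zero, sub_zero]
        have hg : φ (b k * (x - algebraMap ℂ B (ε x)) * (y - algebraMap ℂ B (ε y))) = 0 :=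
          hφgauss _ _ _ (hY k) (hεsub x) (hεsub y)
        rw [← mul_assoc, decompR ε y (b k * x), decompR ε x (b k), add_mul, smul_mul_assoc]
        simp [hg, hx0, hy0, hb0 k]
    intro c k
    exact H c (by rw [hgen]; trivial) k
  -- the two-sided ideal on which all two-sided translates of φ vanish
  set I : TwoSidedIdeal B := TwoSidedIdeal.mk' {x : B | ∀ c d : B, φ (c * x * d) = 0}
    (by intro c d; simp)
    (by intro x y hx hy c d
        rw [mul_add, add_mul, map_add, hx c d, hy c d, add_zero])
    (by intro x hx c d
        rw [mul_neg, neg_mul, map_neg, hx c d, neg_zero])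
    (by intro x y hy c d
        rw [show c * (x * y) * d = (c * x) * y * d by simp [mul_assoc]]; exact hy (c * x) d)
    (by intro x y hx c d
        rw [show c * (x * y) * d = c * x * (y * d) by simp [mul_assoc]]; exact hx c (y * d))
    with hI
  intro x hx
  have hmem : x ∈ I := by
    rw [TwoSidedIdeal.mem_span_iff] at hx
    apply hx
    intro y hy
    obtain ⟨k, rfl⟩ := hy
    show b k ∈ I
    rw [hI, TwoSidedIdeal.mem_mk']
    intro c d
    have hg : φ ((c - algebraMap ℂ B (ε c)) * b k * (d - algebraMap ℂ B (ε d))) = 0 :=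
      hφgauss _ _ _ (hεsub c) (hY k) (hεsub d)
    rw [decompR ε d (c * b k), decompL ε c (b k), add_mul, smul_mul_assoc]
    simp [hg, key_right, key_left, hb0 k]
  have := hmem
  rw [hI, TwoSidedIdeal.mem_mk'] at this
  have h1 := this 1 1
  simpa using h1
end

section
/- Let N ≥ 1, d ∈ ℕ, and L₁, …, L_d, Z ∈ M_N(ℂ). If there exists c ∈ ℂ such that Σ_{r=1}^d L_r* ⊗ L_r = c · (Z* ⊗ Z) (as an equality of Kronecker products in M_{N²}(ℂ)), then for every 1 ≤ r ≤ d there exists λ_r ∈ ℂ with L_r = λ_r · Z. -/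
open scoped Kronecker Matrix

lemma aux_sum_zero {ι : Type*} (s : Finset ι) (f : ι → ℂ)
    (h : ∑ i ∈ s, star (f i) * f i = 0) : ∀ i ∈ s, f i = 0 := by
  have h' : ∑ i ∈ s, Complex.normSq (f i) = 0 := by
    have : ((∑ i ∈ s, Complex.normSq (f i) : ℝ) : ℂ) = 0 := by
      push_cast
      rw [← h]
      refine Finset.sum_congr rfl fun i _ => ?_
      simp [Complex.star_def, Complex.normSq_eq_conj_mul_self]
    exact_mod_cast this
  intro i hi
  have := (Finset.sum_eq_zero_iff_of_nonneg (fun j _ => Complex.normSq_nonneg (f j))).mp h' i hi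
  exact Complex.normSq_eq_zero.mp this

/-- If `Σ_{r=1}^d L_r* ⊗ L_r = c · (Z* ⊗ Z)` as Kronecker products,
then each `L_r` is a scalar multiple of `Z`. -/
theorem stmt_8 {N d : ℕ} (hN : 1 ≤ N)
    (L : Fin d → Matrix (Fin N) (Fin N) ℂ) (Z : Matrix (Fin N) (Fin N) ℂ)
    (c : ℂ) (h : (∑ r, (L r)ᴴ ⊗ₖ L r) = c • (Zᴴ ⊗ₖ Z)) :
    ∀ r, ∃ lam : ℂ, L r = lam • Z := by
  have E : ∀ (a b u v : Fin N),
      ∑ r, star (L r a b) * L r u v = c * (star (Z a b) * Z u v) := by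
    intro a b u v
    have := congrFun (congrFun h (b, u)) (a, v)
    simpa [Matrix.sum_apply, Matrix.kroneckerMap_apply, Matrix.conjTranspose_apply,
      mul_assoc] using this
  by_cases hZ : Z = 0
  · intro r
    refine ⟨0, ?_⟩
    ext k l
    have h0 : ∑ r, star (L r k l) * L r k l = 0 := by
      rw [E k l k l]; simp [hZ]
    have := aux_sum_zero Finset.univ (fun r => L r k l) h0 r (Finset.mem_univ r)
    simpa using this
  · obtain ⟨p, hp⟩ : ∃ p, Z p ≠ 0 := by
      by_contra hc; push_neg at hc; exact hZ (by ext p q; simp [hc p])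
    obtain ⟨q, hq⟩ : ∃ q, Z p q ≠ 0 := by
      by_contra hc; push_neg at hc; exact hp (by ext q; simp [hc q])
    intro r
    refine ⟨L r p q / Z p q, ?_⟩
    ext k l
    have key : ∑ s, star (L s k l * Z p q - L s p q * Z k l)
        * (L s k l * Z p q - L s p q * Z k l) = 0 := by
      have expand : ∑ s, star (L s k l * Z p q - L s p q * Z k l)
          * (L s k l * Z p q - L s p q * Z k l)
          = (∑ s, star (L s k l) * L s k l) * (star (Z p q) * Z p q)
            - (∑ s, star (L s k l) * L s p q) * (star (Z p q) * Z k l)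
            - (∑ s, star (L s p q) * L s k l) * (star (Z k l) * Z p q)
            + (∑ s, star (L s p q) * L s p q) * (star (Z k l) * Z k l) := by
        simp only [Finset.sum_mul, ← Finset.sum_sub_distrib, ← Finset.sum_add_distrib]
        refine Finset.sum_congr rfl fun s _ => ?_
        simp only [star_sub, star_mul]
        ring
      rw [expand, E k l k l, E k l p q, E p q k l, E p q p q]
      ring
    have hz := aux_sum_zero Finset.univ
      (fun s => L s k l * Z p q - L s p q * Z k l) key r (Finset.mem_univ r)
    have hz' : L r k l * Z p q = L r p q * Z k l := by
      have := sub_eq_zero.mp hz; linear_combination this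
    simp only [Matrix.smul_apply, smul_eq_mul]
    field_simp
    linear_combination hz'
end

section
/- Let (B, ε) be an augmented algebra and φ : B → ℂ a Gaussian generating functional. Then for every p ≥ 1 and all a₁, …, a_p ∈ B with ε(a_k) = 1 for every k, one has φ(a₁ a₂ ⋯ a_p) = Σ_{1 ≤ k < l ≤ p} φ(a_k a_l) − (p − 2) Σ_{k=1}^p φ(a_k). -/
open scoped ComplexOrder

/-- Pairwise sum `Σ_{k<l} φ(x_k x_l)` along a list. -/
def pairSum {B : Type*} [Ring B] [Algebra ℂ B] (φ : B →ₗ[ℂ] ℂ) : List B → ℂ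
  | [] => 0
  | x :: t => ((t.map fun y => φ (x * y)).sum) + pairSum φ t

lemma sum_sub_aux {B : Type*} [Ring B] [Algebra ℂ B] (φ : B →ₗ[ℂ] ℂ) (x : B) :
    ∀ s : List B, ((s.map fun y => φ (x * y) - φ x - φ y).sum)
        = (s.map fun y => φ (x * y)).sum - (s.length : ℂ) * φ x - (s.map φ).sum := by
  intro s
  induction s with
  | nil => simp
  | cons z u ihu =>
    simp only [List.map_cons, List.sum_cons, List.length_cons, Nat.cast_add, Nat.cast_one]
    rw [ihu]
    ring

section Aux

variable {B : Type*} [Ring B] [Algebra ℂ B]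
  (ε : B →ₐ[ℂ] ℂ) (φ : B →ₗ[ℂ] ℂ)
  (hφ1 : φ 1 = 0)
  (hφgauss : ∀ a b c : B, ε a = 0 → ε b = 0 → ε c = 0 → φ (a * b * c) = 0)

include hφ1 hφgauss

lemma key3 (x y z : B) (hx : ε x = 1) (hy : ε y = 1) (hz : ε z = 1) :
    φ (x * y * z) = φ (x * y) + φ (x * z) + φ (y * z) - φ x - φ y - φ z := by
  have h := hφgauss (x - 1) (y - 1) (z - 1) (by simp [hx]) (by simp [hy]) (by simp [hz])
  have hexp : (x - 1) * (y - 1) * (z - 1)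
      = x * y * z - x * y - x * z - y * z + x + y + z - 1 := by noncomm_ring
  rw [hexp] at h
  simp only [map_sub, map_add, hφ1] at h
  linear_combination h

lemma aux_expand : ∀ (t : List B) (x : B), ε x = 1 → (∀ y ∈ t, ε y = 1) →
    φ (x * t.prod) = φ x + φ t.prod +
      ((t.map fun y => φ (x * y) - φ x - φ y).sum) := by
  intro t
  induction t with
  | nil => intro x hx _; simp [hφ1]
  | cons y s ih =>
    intro x hx hmem
    have hy : ε y = 1 := hmem y (by simp)
    have hs : ∀ z ∈ s, ε z = 1 := fun z hz => hmem z (by simp [hz])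
    have hZ : ε s.prod = 1 := by
      rw [map_list_prod]
      apply List.prod_eq_one
      intro c hc
      obtain ⟨z, hz, rfl⟩ := List.mem_map.1 hc
      exact hs z hz
    have hxZ := ih x hx hs
    have hyZ := ih y hy hs
    have h3 := key3 ε φ hφ1 hφgauss x y s.prod hx hy hZ
    simp only [List.prod_cons, List.map_cons, List.sum_cons]
    rw [← mul_assoc, h3, hxZ, hyZ]
    ring

lemma main_list : ∀ (t : List B), (∀ y ∈ t, ε y = 1) →
    φ t.prod = pairSum φ t - ((t.length : ℂ) - 2) * (t.map φ).sum := by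
  intro t
  induction t with
  | nil => simp [pairSum, hφ1]
  | cons x s ih =>
    intro hmem
    have hx : ε x = 1 := hmem x (by simp)
    have hs : ∀ z ∈ s, ε z = 1 := fun z hz => hmem z (by simp [hz])
    have hexp := aux_expand ε φ hφ1 hφgauss s x hx hs
    have hsum := sum_sub_aux φ x s
    simp only [List.prod_cons, List.map_cons, List.sum_cons, List.length_cons,
      Nat.cast_add, Nat.cast_one, pairSum]
    rw [hexp, ih hs, hsum]
    ring

end Aux

lemma pairSum_ofFn {B : Type*} [Ring B] [Algebra ℂ B] (φ : B →ₗ[ℂ] ℂ) :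
    ∀ (p : ℕ) (a : Fin p → B),
      pairSum φ (List.ofFn a)
        = ∑ k : Fin p, ∑ l : Fin p, if k < l then φ (a k * a l) else 0 := by
  intro p
  induction p with
  | zero => intro a; simp [pairSum]
  | succ n ih =>
    intro a
    rw [List.ofFn_succ]
    simp only [pairSum]
    rw [Fin.sum_univ_succ]
    congr 1
    · -- first row: k = 0
      rw [Fin.sum_univ_succ]
      simp only [lt_self_iff_false, if_false, zero_add]
      rw [List.map_ofFn, List.sum_ofFn]
      apply Finset.sum_congr rfl
      intro j _
      simp [Fin.succ_pos]
    · rw [ih (fun i => a i.succ)]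
      apply Finset.sum_congr rfl
      intro i _
      rw [Fin.sum_univ_succ]
      simp only [Fin.not_lt_zero, if_false, zero_add]
      apply Finset.sum_congr rfl
      intro j _
      simp [Fin.succ_lt_succ_iff]

/-- If `φ` is a Gaussian generating functional on an augmented algebra
`(B, ε)` and `a₁, …, a_p ∈ B` (with `p ≥ 1`) satisfy `ε(a_k) = 1` for all `k`, then
`φ(a₁ ⋯ a_p) = Σ_{k<l} φ(a_k a_l) − (p − 2) Σ_k φ(a_k)`. -/
theorem stmt_12 {B : Type*} [Ring B] [Algebra ℂ B] [StarRing B]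
    (ε : B →ₐ[ℂ] ℂ) (φ : B →ₗ[ℂ] ℂ)
    (hφ1 : φ 1 = 0)
    (hφherm : ∀ b : B, φ (star b) = starRingEnd ℂ (φ b))
    (hφpos : ∀ b : B, ε b = 0 → 0 ≤ φ (star b * b))
    (hφgauss : ∀ a b c : B, ε a = 0 → ε b = 0 → ε c = 0 → φ (a * b * c) = 0)
    {p : ℕ} (hp : 1 ≤ p) (a : Fin p → B) (ha : ∀ k, ε (a k) = 1) :
    φ (List.ofFn a).prod =
      (∑ k : Fin p, ∑ l : Fin p, if k < l then φ (a k * a l) else 0)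
        - ((p : ℂ) - 2) * ∑ k : Fin p, φ (a k) := by
  have h := main_list ε φ hφ1 hφgauss (List.ofFn a) (by
    intro y hy
    rw [List.mem_ofFn] at hy
    obtain ⟨i, rfl⟩ := hy
    exact ha i)
  rw [h, pairSum_ofFn]
  congr 1
  rw [List.map_ofFn, List.sum_ofFn]
  simp
end

section
/- Let (B, ε) be an augmented algebra, N ≥ 1, and let (u_{ij})_{1≤i,j≤N} be elements of B with ε(u_{ij}) = δ_{ij}. Let φ : B → ℂ be a Gaussian generating functional and set φ₁ = Σ_{i=1}^N φ(u_{ii}) and φ₂ = Σ_{i,j=1}^N φ(u_{ii} u_{jj}). Then for every p ≥ 2: Σ_{j₁,…,j_p = 1}^N φ(u_{j₁j₁} u_{j₂j₂} ⋯ u_{j_p j_p}) = (p(p−1)/2) · N^{p−2} · φ₂ − p(p−2) · N^{p−1} · φ₁. -/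
/-!
Write `u_{ii} = 1 + v_i` with `ε(v_i) = 0`. Expanding `φ((1 + v_{j₁}) ⋯ (1 + v_{j_p}))`, every
monomial of degree at least three in the `v`'s is killed by `φ` and the constant term by `φ(1) = 0`,
so only `Σ_k φ(v_{j_k})` and `Σ_{k<l} φ(v_{j_k} v_{j_l})` survive. Summing over the indices `j`
turns these into `p N^{p-1} φ₁` and `(p choose 2) N^{p-2} (φ₂ - 2Nφ₁)`.
-/

open Finset
open scoped ComplexOrder

section Gaussian

variable {R B : Type*} [CommRing R] [Ring B] [Algebra R B] (ε : B →ₐ[R] R) (φ : B →ₗ[R] R)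

lemma AlgHom.map_prod_ofFn_one_add {n : ℕ} {f : Fin n → B} (hf : ∀ k, ε (f k) = 0) :
    ε (List.ofFn fun k => 1 + f k).prod = 1 := by
  simp [map_list_prod, List.map_ofFn, Function.comp_def, hf]

lemma map_mul_mul_prod_ofFn_one_add_of_gaussian
    (hφ : ∀ a b c : B, ε a = 0 → ε b = 0 → ε c = 0 → φ (a * b * c) = 0)
    {a b : B} (ha : ε a = 0) (hb : ε b = 0) {n : ℕ} {f : Fin n → B} (hf : ∀ k, ε (f k) = 0) :
    φ (a * b * (List.ofFn fun k => 1 + f k).prod) = φ (a * b) := by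
  set P := (List.ofFn fun k => 1 + f k).prod
  have hP : ε (P - 1) = 0 := by rw [map_sub, ε.map_prod_ofFn_one_add hf, map_one, sub_self]
  calc φ (a * b * P) = φ (a * b) + φ (a * b * (P - 1)) := by
        rw [← map_add, mul_sub, mul_one, add_sub_cancel]
    _ = φ (a * b) := by rw [hφ a b _ ha hb hP, add_zero]

lemma map_mul_prod_ofFn_one_add_of_gaussian
    (hφ : ∀ a b c : B, ε a = 0 → ε b = 0 → ε c = 0 → φ (a * b * c) = 0)
    {a : B} (ha : ε a = 0) {n : ℕ} {f : Fin n → B} (hf : ∀ k, ε (f k) = 0) :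
    φ (a * (List.ofFn fun k => 1 + f k).prod) = φ a + ∑ k, φ (a * f k) := by
  induction n with
  | zero => simp
  | succ n ih =>
    rw [List.ofFn_succ, List.prod_cons, add_mul, one_mul, mul_add, ← mul_assoc, map_add,
      ih fun k => hf k.succ,
      map_mul_mul_prod_ofFn_one_add_of_gaussian ε φ hφ ha (hf 0) fun k => hf k.succ,
      Fin.sum_univ_succ]
    ring

theorem map_prod_ofFn_one_add_of_gaussian (hφ1 : φ 1 = 0)
    (hφ : ∀ a b c : B, ε a = 0 → ε b = 0 → ε c = 0 → φ (a * b * c) = 0)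
    {n : ℕ} {f : Fin n → B} (hf : ∀ k, ε (f k) = 0) :
    φ (List.ofFn fun k => 1 + f k).prod = ∑ k, φ (f k) + ∑ k, ∑ l ∈ Ioi k, φ (f k * f l) := by
  induction n with
  | zero => simp [hφ1]
  | succ n ih =>
    rw [List.ofFn_succ, List.prod_cons, add_mul, one_mul, map_add, ih fun k => hf k.succ,
      map_mul_prod_ofFn_one_add_of_gaussian ε φ hφ (hf 0) fun k => hf k.succ, Fin.sum_univ_succ,
      Fin.sum_univ_succ, Fin.sum_Ioi_zero]
    simp only [Fin.sum_Ioi_succ]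
    ring

end Gaussian

section Counting

variable {ι α M : Type*} [Fintype ι] [DecidableEq ι] [Fintype α] [AddCommMonoid M]

theorem Fintype.sum_comp_eval (k : ι) (g : α → M) :
    ∑ j : ι → α, g (j k) = (Fintype.card α ^ (Fintype.card ι - 1)) • ∑ a, g a := by
  rw [← (Equiv.funSplitAt k α).symm.sum_comp, Fintype.sum_prod_type]
  simp [Equiv.funSplitAt_symm_apply, Fintype.card_subtype_compl, smul_sum]

theorem Fintype.sum_comp_eval_eval {k l : ι} (hkl : k ≠ l) (g : α → α → M) :
    ∑ j : ι → α, g (j k) (j l) = (Fintype.card α ^ (Fintype.card ι - 2)) • ∑ a, ∑ b, g a b := by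
  rw [← (Equiv.funSplitAt k α).symm.sum_comp, Fintype.sum_prod_type, smul_sum]
  refine Finset.sum_congr rfl fun a _ => ?_
  simp only [Equiv.funSplitAt_symm_apply, dite_true, hkl.symm, dite_false]
  rw [Fintype.sum_comp_eval (⟨l, hkl.symm⟩ : {j // j ≠ k}) (g a), Fintype.card_subtype_compl,
    Fintype.card_subtype_eq, Nat.sub_sub]

theorem Fin.sum_card_Ioi (p : ℕ) : ∑ k : Fin p, #(Ioi k) = p.choose 2 := by
  simp only [Fin.card_Ioi]
  rw [Fin.sum_univ_eq_sum_range (fun k => p - 1 - k), sum_range_reflect (fun k => k) p,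
    sum_range_id, Nat.choose_two_right]

theorem Fin.sum_pi_sum_add_sum_Ioi (p : ℕ) (g : α → M) (h : α → α → M) :
    ∑ j : Fin p → α, (∑ k, g (j k) + ∑ k, ∑ l ∈ Ioi k, h (j k) (j l)) =
      (p * Fintype.card α ^ (p - 1)) • ∑ a, g a
        + (p.choose 2 * Fintype.card α ^ (p - 2)) • ∑ a, ∑ b, h a b := by
  have hpairs : ∀ k : Fin p, ∑ l ∈ Ioi k, ∑ j : Fin p → α, h (j k) (j l)
      = #(Ioi k) • Fintype.card α ^ (p - 2) • ∑ a, ∑ b, h a b := fun k => by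
    rw [Finset.sum_congr rfl fun l hl => Fintype.sum_comp_eval_eval (mem_Ioi.mp hl).ne h,
      Finset.sum_const, Fintype.card_fin]
  rw [sum_add_distrib, sum_comm]
  conv_lhs => enter [2]; rw [sum_comm]; enter [2, k]; rw [sum_comm]
  simp only [hpairs, Fintype.sum_comp_eval, Fintype.card_fin]
  rw [Finset.sum_const, ← sum_smul, Fin.sum_card_Ioi, card_univ, Fintype.card_fin, mul_smul,
    mul_smul]

end Counting

theorem stmt_13_general {B : Type*} [Ring B] [Algebra ℂ B]
    (ε : B →ₐ[ℂ] ℂ) (φ : B →ₗ[ℂ] ℂ)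
    (hφ1 : φ 1 = 0)
    (hφgauss : ∀ a b c : B, ε a = 0 → ε b = 0 → ε c = 0 → φ (a * b * c) = 0)
    {N : ℕ} (u : Fin N → Fin N → B)
    (hu : ∀ i j, ε (u i j) = if i = j then 1 else 0)
    (φ₁ φ₂ : ℂ)
    (hφ₁ : φ₁ = ∑ i : Fin N, φ (u i i))
    (hφ₂ : φ₂ = ∑ i : Fin N, ∑ j : Fin N, φ (u i i * u j j))
    {p : ℕ} (hp : 2 ≤ p) :
    (∑ j : Fin p → Fin N, φ (List.ofFn fun k => u (j k) (j k)).prod) =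
      (p : ℂ) * ((p : ℂ) - 1) / 2 * (N : ℂ) ^ (p - 2) * φ₂
        - (p : ℂ) * ((p : ℂ) - 2) * (N : ℂ) ^ (p - 1) * φ₁ := by
  set v : Fin N → B := fun i => u i i - 1
  have hv : ∀ i, ε (v i) = 0 := fun i => by simp [v, hu]
  have hv₁ : ∑ i, φ (v i) = φ₁ := by simp [v, hφ1, hφ₁]
  have hv₂ : ∑ i, ∑ i', φ (v i * v i') = φ₂ - 2 * N * φ₁ := by
    have hexpand : ∀ i i', v i * v i' = u i i * u i' i' - u i i - u i' i' + 1 := fun i i' => by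
      simp only [v]; noncomm_ring
    simp only [hexpand, map_add, map_sub, hφ1, add_zero, sum_sub_distrib, Finset.sum_const,
      card_univ, Fintype.card_fin, nsmul_eq_mul, ← mul_sum, hφ₁, hφ₂]
    ring
  have hterm : ∀ j : Fin p → Fin N, φ (List.ofFn fun k => u (j k) (j k)).prod
      = ∑ k, φ (v (j k)) + ∑ k, ∑ l ∈ Ioi k, φ (v (j k) * v (j l)) := fun j => by
    simpa only [v, add_sub_cancel] using
      map_prod_ofFn_one_add_of_gaussian ε φ hφ1 hφgauss fun k => hv (j k)
  have hpow : (N : ℂ) ^ (p - 1) = N ^ (p - 2) * N := by rw [← pow_succ]; congr 1; omega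
  rw [Finset.sum_congr rfl fun j _ => hterm j,
    Fin.sum_pi_sum_add_sum_Ioi p (fun i => φ (v i)) fun i i' => φ (v i * v i'), hv₁, hv₂]
  simp only [nsmul_eq_mul, Nat.cast_mul, Nat.cast_pow, Nat.cast_choose_two, Fintype.card_fin, hpow]
  ring

/-- Let `(u_{ij})` be elements of an augmented algebra `(B, ε)` with
`ε(u_{ij}) = δ_{ij}`, let `φ` be a Gaussian generating functional, and set
`φ₁ = Σ_i φ(u_{ii})`, `φ₂ = Σ_{i,j} φ(u_{ii} u_{jj})`. Then for every `p ≥ 2`,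
`Σ_{j₁,…,j_p} φ(u_{j₁j₁} ⋯ u_{j_pj_p})
  = (p(p−1)/2) N^{p−2} φ₂ − p(p−2) N^{p−1} φ₁`. -/
theorem stmt_13 {B : Type*} [Ring B] [Algebra ℂ B] [StarRing B]
    (ε : B →ₐ[ℂ] ℂ) (φ : B →ₗ[ℂ] ℂ)
    (hφ1 : φ 1 = 0)
    (hφherm : ∀ b : B, φ (star b) = starRingEnd ℂ (φ b))
    (hφpos : ∀ b : B, ε b = 0 → 0 ≤ φ (star b * b))
    (hφgauss : ∀ a b c : B, ε a = 0 → ε b = 0 → ε c = 0 → φ (a * b * c) = 0)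
    {N : ℕ} (hN : 1 ≤ N) (u : Fin N → Fin N → B)
    (hu : ∀ i j, ε (u i j) = if i = j then 1 else 0)
    (φ₁ φ₂ : ℂ)
    (hφ₁ : φ₁ = ∑ i : Fin N, φ (u i i))
    (hφ₂ : φ₂ = ∑ i : Fin N, ∑ j : Fin N, φ (u i i * u j j))
    {p : ℕ} (hp : 2 ≤ p) :
    (∑ j : Fin p → Fin N, φ (List.ofFn fun k => u (j k) (j k)).prod) =
      (p : ℂ) * ((p : ℂ) - 1) / 2 * (N : ℂ) ^ (p - 2) * φ₂
        - (p : ℂ) * ((p : ℂ) - 2) * (N : ℂ) ^ (p - 1) * φ₁ :=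
  stmt_13_general ε φ hφ1 hφgauss u hu φ₁ φ₂ hφ₁ hφ₂ hp
end

section
/- Let N, d ≥1, let F_N be the free group on generators g₁, …, g_N, let v₁, …, v_N ∈ ℂ^d, and let ν₁, …, ν_N ∈ ℝ. Then there exists a unique pair (φ, η), where η : F_N → ℂ^d is a map with η(gh) = η(g) + η(h) for all g, h ∈ F_N, and φ : F_N → ℂ is a map satisfying: (a) η(g_i) = v_i for all i; (b) φ(e) = 0 and φ(g⁻¹) = conj(φ(g)) for all g ∈ F_N; (c) φ(gh) − φ(g) − φ(h) = ⟨η(g⁻¹), η(h)⟩ for all g, h ∈ F_N; (d) φ(g_i) = i·ν_i − (1/2)‖v_i‖² for all i. Moreover, this φ is conditionally positive definite: for every finitely supported function c : F_N → ℂ with Σ_g c(g) = 0, the number Σ_{g,h} conj(c(g)) · c(h) · φ(g⁻¹h) is real and nonnegative. -/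
/-!
Additivity of `η` together with the cocycle identity (c) say exactly that `g ↦ (φ g, η g)` is a
group homomorphism into the Heisenberg-type group `𝕜 × E` with product
`(z, w) (z', w') = (z + z' - ⟪w, w'⟫, w + w')`. Condition (b) says that it lands in the subgroup
of those `p` with `(p⁻¹).z = conj p.z`, i.e. `2 Re z = -‖w‖²`, which contains the prescribed images
of the generators. Existence and uniqueness are then the universal property of the free group.
Writing (c) as `φ (g⁻¹ h) = conj (φ g) + φ h + ⟪η g, η h⟫`, the first two terms vanish against
coefficients of total sum zero, and the last one sums to `‖∑ c g • η g‖²`.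
-/

open scoped ComplexOrder InnerProductSpace

/-- The defining conditions of the Gaussian pair `(φ, η)` on the free group `F_N`
determined by vectors `v₁, …, v_N ∈ ℂ^d` and real numbers `ν₁, …, ν_N`. -/
def FreeGaussianPair {N d : ℕ} (v : Fin N → EuclideanSpace ℂ (Fin d))
    (ν : Fin N → ℝ) (φ : FreeGroup (Fin N) → ℂ)
    (η : FreeGroup (Fin N) → EuclideanSpace ℂ (Fin d)) : Prop :=
  (∀ g h : FreeGroup (Fin N), η (g * h) = η g + η h) ∧
  (∀ i : Fin N, η (FreeGroup.of i) = v i) ∧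
  φ 1 = 0 ∧
  (∀ g : FreeGroup (Fin N), φ g⁻¹ = starRingEnd ℂ (φ g)) ∧
  (∀ g h : FreeGroup (Fin N), φ (g * h) - φ g - φ h = ⟪η g⁻¹, η h⟫_ℂ) ∧
  (∀ i : Fin N, φ (FreeGroup.of i) = Complex.I * (ν i : ℂ) - (1 / 2) * (‖v i‖ : ℂ) ^ 2)

@[ext] structure Heisenberg (𝕜 E : Type*) where
  z : 𝕜
  w : E

namespace Heisenberg

instance {𝕜 E : Type*} [Zero 𝕜] [Zero E] : One (Heisenberg 𝕜 E) := ⟨⟨0, 0⟩⟩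

@[simp] lemma one_z {𝕜 E : Type*} [Zero 𝕜] [Zero E] : (1 : Heisenberg 𝕜 E).z = 0 := rfl
@[simp] lemma one_w {𝕜 E : Type*} [Zero 𝕜] [Zero E] : (1 : Heisenberg 𝕜 E).w = 0 := rfl

variable {𝕜 E : Type*} [RCLike 𝕜] [NormedAddCommGroup E] [InnerProductSpace 𝕜 E]

instance : Mul (Heisenberg 𝕜 E) := ⟨fun p q => ⟨p.z + q.z - ⟪p.w, q.w⟫_𝕜, p.w + q.w⟩⟩
instance : Inv (Heisenberg 𝕜 E) := ⟨fun p => ⟨-p.z - ⟪p.w, p.w⟫_𝕜, -p.w⟩⟩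

@[simp] lemma mul_z (p q : Heisenberg 𝕜 E) : (p * q).z = p.z + q.z - ⟪p.w, q.w⟫_𝕜 := rfl
@[simp] lemma mul_w (p q : Heisenberg 𝕜 E) : (p * q).w = p.w + q.w := rfl
@[simp] lemma inv_z (p : Heisenberg 𝕜 E) : p⁻¹.z = -p.z - ⟪p.w, p.w⟫_𝕜 := rfl
@[simp] lemma inv_w (p : Heisenberg 𝕜 E) : p⁻¹.w = -p.w := rfl

instance : Group (Heisenberg 𝕜 E) where
  mul_assoc p q r := by
    ext
    · simp only [mul_z, mul_w, inner_add_left, inner_add_right]; ring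
    · simp only [mul_w, add_assoc]
  one_mul p := by ext <;> simp
  mul_one p := by ext <;> simp
  inv_mul_cancel p := by
    ext
    · simp only [mul_z, inv_z, inv_w, one_z, inner_neg_left]; ring
    · simp

def gaussianSubgroup (𝕜 E : Type*) [RCLike 𝕜] [NormedAddCommGroup E] [InnerProductSpace 𝕜 E] :
    Subgroup (Heisenberg 𝕜 E) where
  carrier := {p | p⁻¹.z = starRingEnd 𝕜 p.z}
  one_mem' := by simp
  mul_mem' {p q} hp hq := by
    simp only [Set.mem_ofPred_eq, inv_z, mul_z, mul_w, map_sub, map_add, inner_conj_symm]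
      at hp hq ⊢
    rw [← hp, ← hq, inner_add_add_self]
    ring
  inv_mem' {p} hp := by
    simp only [Set.mem_ofPred_eq, inv_inv] at hp ⊢
    rw [hp, RCLike.conj_conj]

variable {G : Type*} [Group G]

def homOfCocycle (φ : G → 𝕜) (η : G → E) (hη : ∀ g h, η (g * h) = η g + η h)
    (hφ : ∀ g h, φ (g * h) - φ g - φ h = ⟪η g⁻¹, η h⟫_𝕜) : G →* Heisenberg 𝕜 E :=
  MonoidHom.mk' (fun g => ⟨φ g, η g⟩) fun g h => by
    have hη_inv : η g⁻¹ = -η g :=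
      (AddMonoidHom.mk' (fun a : Additive G => η a.toMul) fun _ _ => hη _ _).map_neg
        (Additive.ofMul g)
    have hφ_mul := hφ g h
    rw [hη_inv, inner_neg_left] at hφ_mul
    ext
    · show φ (g * h) = φ g + φ h - ⟪η g, η h⟫_𝕜
      linear_combination hφ_mul
    · exact hη g h

@[simp] lemma homOfCocycle_apply (φ : G → 𝕜) (η : G → E) (hη hφ) (g : G) :
    homOfCocycle φ η hη hφ g = ⟨φ g, η g⟩ := rfl

lemma cocycle_of_hom (f : G →* Heisenberg 𝕜 E) (g h : G) :
    (f (g * h)).z - (f g).z - (f h).z = ⟪(f g⁻¹).w, (f h).w⟫_𝕜 := by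
  rw [map_mul, map_inv, mul_z, inv_w, inner_neg_left]
  ring

end Heisenberg

section ConditionallyPositiveDefinite

variable {𝕜 E G : Type*} [RCLike 𝕜] [NormedAddCommGroup E] [InnerProductSpace 𝕜 E] [Group G]

lemma sum_sum_conj_mul_mul_eq_inner_of_cocycle {φ : G → 𝕜} {η : G → E}
    (hφ_inv : ∀ g, φ g⁻¹ = starRingEnd 𝕜 (φ g))
    (hφ : ∀ g h, φ (g * h) - φ g - φ h = ⟪η g⁻¹, η h⟫_𝕜)
    (s : Finset G) (c : G → 𝕜) (hc : ∑ g ∈ s, c g = 0) :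
    ∑ g ∈ s, ∑ h ∈ s, starRingEnd 𝕜 (c g) * c h * φ (g⁻¹ * h) =
      ⟪∑ g ∈ s, c g • η g, ∑ h ∈ s, c h • η h⟫_𝕜 := by
  have hφ_mul (g h : G) : φ (g⁻¹ * h) = starRingEnd 𝕜 (φ g) + φ h + ⟪η g, η h⟫_𝕜 := by
    have := hφ g⁻¹ h
    rw [inv_inv, hφ_inv] at this
    linear_combination this
  have hc_conj : ∑ g ∈ s, starRingEnd 𝕜 (c g) = 0 := by rw [← map_sum, hc, map_zero]
  calc ∑ g ∈ s, ∑ h ∈ s, starRingEnd 𝕜 (c g) * c h * φ (g⁻¹ * h)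
      = (∑ g ∈ s, starRingEnd 𝕜 (c g) * starRingEnd 𝕜 (φ g)) * ∑ h ∈ s, c h
        + (∑ g ∈ s, starRingEnd 𝕜 (c g)) * ∑ h ∈ s, c h * φ h
        + ∑ g ∈ s, ∑ h ∈ s, starRingEnd 𝕜 (c g) * c h * ⟪η g, η h⟫_𝕜 := by
        simp only [Finset.sum_mul_sum, hφ_mul, ← Finset.sum_add_distrib]
        refine Finset.sum_congr rfl fun g _ => Finset.sum_congr rfl fun h _ => ?_
        ring
    _ = ⟪∑ g ∈ s, c g • η g, ∑ h ∈ s, c h • η h⟫_𝕜 := by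
        rw [hc, hc_conj, mul_zero, zero_mul, zero_add, zero_add, sum_inner]
        simp only [inner_smul_left, inner_sum, inner_smul_right]
        refine Finset.sum_congr rfl fun g _ => Finset.sum_congr rfl fun h _ => ?_
        ring

end ConditionallyPositiveDefinite

section FreeGroup

variable {E : Type*} [NormedAddCommGroup E] [InnerProductSpace ℂ E] {N : ℕ}

open Heisenberg

lemma mk_mem_gaussianSubgroup (ν : ℝ) (w : E) :
    (⟨Complex.I * ν - (1 / 2) * (‖w‖ : ℂ) ^ 2, w⟩ : Heisenberg ℂ E) ∈ gaussianSubgroup ℂ E := by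
  show -(Complex.I * ν - (1 / 2) * (‖w‖ : ℂ) ^ 2) - ⟪w, w⟫_ℂ =
    starRingEnd ℂ (Complex.I * ν - (1 / 2) * (‖w‖ : ℂ) ^ 2)
  rw [inner_self_eq_norm_sq_to_K, ← RCLike.ofReal_eq_complex_ofReal]
  simp only [map_sub, map_mul, Complex.conj_I, RCLike.conj_ofReal, map_pow, map_div₀, map_one,
    map_ofNat]
  ring

variable (v : Fin N → E) (ν : Fin N → ℝ)

noncomputable def freeGaussianHom : FreeGroup (Fin N) →* Heisenberg ℂ E :=
  (gaussianSubgroup ℂ E).subtype.comp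
    (FreeGroup.lift fun i => ⟨_, mk_mem_gaussianSubgroup (ν i) (v i)⟩)

lemma freeGaussianHom_mem (g : FreeGroup (Fin N)) :
    freeGaussianHom v ν g ∈ gaussianSubgroup ℂ E :=
  Subtype.prop _

lemma freeGaussianHom_of (i : Fin N) :
    freeGaussianHom v ν (FreeGroup.of i) =
      ⟨Complex.I * ν i - (1 / 2) * (‖v i‖ : ℂ) ^ 2, v i⟩ := by
  rw [freeGaussianHom, MonoidHom.comp_apply, FreeGroup.lift_apply_of, Subgroup.coe_subtype]

end FreeGroup

section FreeGaussianPair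

variable {N d : ℕ} {v : Fin N → EuclideanSpace ℂ (Fin d)} {ν : Fin N → ℝ}

open Heisenberg

lemma freeGaussianPair_freeGaussianHom :
    FreeGaussianPair v ν (fun g => (freeGaussianHom v ν g).z)
      (fun g => (freeGaussianHom v ν g).w) := by
  refine ⟨fun g h => ?_, fun i => ?_, ?_, fun g => ?_, cocycle_of_hom _, fun i => ?_⟩
  · exact congrArg Heisenberg.w (map_mul (freeGaussianHom v ν) g h)
  · exact congrArg Heisenberg.w (freeGaussianHom_of v ν i)
  · exact congrArg Heisenberg.z (map_one (freeGaussianHom v ν))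
  · exact (congrArg Heisenberg.z (map_inv (freeGaussianHom v ν) g)).trans
      (freeGaussianHom_mem v ν g)
  · exact congrArg Heisenberg.z (freeGaussianHom_of v ν i)

lemma FreeGaussianPair.eq_freeGaussianHom {φ : FreeGroup (Fin N) → ℂ}
    {η : FreeGroup (Fin N) → EuclideanSpace ℂ (Fin d)} (hp : FreeGaussianPair v ν φ η) :
    (φ, η) = (fun g => (freeGaussianHom v ν g).z,
      fun g => (freeGaussianHom v ν g).w) := by
  obtain ⟨hη, hη_of, -, -, hφ, hφ_of⟩ := hp
  have hf : homOfCocycle φ η hη hφ = freeGaussianHom v ν :=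
    FreeGroup.ext_hom _ _ fun i => by rw [homOfCocycle_apply, freeGaussianHom_of, hη_of, hφ_of]
  exact Prod.ext (funext fun g => congrArg Heisenberg.z (DFunLike.congr_fun hf g))
    (funext fun g => congrArg Heisenberg.w (DFunLike.congr_fun hf g))

end FreeGaussianPair

theorem stmt_15_general {N d : ℕ}
    (v : Fin N → EuclideanSpace ℂ (Fin d)) (ν : Fin N → ℝ) :
    (∃! p : (FreeGroup (Fin N) → ℂ) × (FreeGroup (Fin N) → EuclideanSpace ℂ (Fin d)),
      FreeGaussianPair v ν p.1 p.2) ∧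
    (∀ (φ : FreeGroup (Fin N) → ℂ)
        (η : FreeGroup (Fin N) → EuclideanSpace ℂ (Fin d)),
      FreeGaussianPair v ν φ η →
      ∀ c : FreeGroup (Fin N) →₀ ℂ, (∑ g ∈ c.support, c g) = 0 →
        0 ≤ ∑ g ∈ c.support, ∑ h ∈ c.support,
          starRingEnd ℂ (c g) * c h * φ (g⁻¹ * h)) := by
  refine ⟨⟨_, freeGaussianPair_freeGaussianHom,
    fun _ hp => FreeGaussianPair.eq_freeGaussianHom hp⟩, ?_⟩
  rintro φ η ⟨-, -, -, hφ_inv, hφ, -⟩ c hc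
  rw [sum_sum_conj_mul_mul_eq_inner_of_cocycle hφ_inv hφ _ _ hc, inner_self_eq_norm_sq_to_K,
    ← RCLike.ofReal_pow]
  exact Complex.zero_le_real.mpr (sq_nonneg _)

/-- For any `v₁, …, v_N ∈ ℂ^d` and `ν₁, …, ν_N ∈ ℝ` there is a unique
pair `(φ, η)` on the free group `F_N` with `η` additive, `η(g_i) = v_i`, `φ(e) = 0`,
`φ(g⁻¹) = conj φ(g)`, `φ(gh) − φ(g) − φ(h) = ⟨η(g⁻¹), η(h)⟩` and
`φ(g_i) = iν_i − ‖v_i‖²/2`; moreover this `φ` is conditionally positive definite. -/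
theorem stmt_15 {N d : ℕ} (hN : 1 ≤ N) (hd : 1 ≤ d)
    (v : Fin N → EuclideanSpace ℂ (Fin d)) (ν : Fin N → ℝ) :
    (∃! p : (FreeGroup (Fin N) → ℂ) × (FreeGroup (Fin N) → EuclideanSpace ℂ (Fin d)),
      FreeGaussianPair v ν p.1 p.2) ∧
    (∀ (φ : FreeGroup (Fin N) → ℂ)
        (η : FreeGroup (Fin N) → EuclideanSpace ℂ (Fin d)),
      FreeGaussianPair v ν φ η →
      ∀ c : FreeGroup (Fin N) →₀ ℂ, (∑ g ∈ c.support, c g) = 0 →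
        0 ≤ ∑ g ∈ c.support, ∑ h ∈ c.support,
          starRingEnd ℂ (c g) * c h * φ (g⁻¹ * h)) :=
  stmt_15_general v ν
end

section
/- Let (B, ε) be an augmented algebra and φ : B → ℂ a Gaussian generating functional, and let ∂φ(a ⊗ b) = φ(ab) − ε(a)φ(b) − φ(a)ε(b) denote its coboundary. Then: (1) for all a, b, c ∈ B, ∂φ(a ⊗ bc) = ∂φ(a ⊗ b)ε(c) + ∂φ(a ⊗ c)ε(b); and (2) for every b ∈ B, the number ∂φ(b* ⊗ b) is real and nonnegative. -/
open scoped ComplexOrder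

/-- Let `φ` be a Gaussian generating functional on an augmented algebra
`(B, ε)` and let `∂φ(a ⊗ b) = φ(ab) − ε(a)φ(b) − φ(a)ε(b)` be its coboundary. Then:
(1) `∂φ(a ⊗ bc) = ∂φ(a ⊗ b) ε(c) + ∂φ(a ⊗ c) ε(b)` for all `a, b, c ∈ B`, and
(2) `∂φ(b* ⊗ b)` is real and nonnegative for every `b ∈ B`. -/
theorem stmt_17 {B : Type*} [Ring B] [Algebra ℂ B] [StarRing B] [StarModule ℂ B]
    (ε : B →ₐ[ℂ] ℂ) (hε : ∀ b : B, ε (star b) = starRingEnd ℂ (ε b))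
    (φ : B →ₗ[ℂ] ℂ)
    (hφ1 : φ 1 = 0)
    (hφherm : ∀ b : B, φ (star b) = starRingEnd ℂ (φ b))
    (hφpos : ∀ b : B, ε b = 0 → 0 ≤ φ (star b * b))
    (hφgauss : ∀ a b c : B, ε a = 0 → ε b = 0 → ε c = 0 → φ (a * b * c) = 0) :
    (∀ a b c : B,
      φ (a * (b * c)) - ε a * φ (b * c) - φ a * ε (b * c) =
        (φ (a * b) - ε a * φ b - φ a * ε b) * ε c
          + (φ (a * c) - ε a * φ c - φ a * ε c) * ε b) ∧
    (∀ b : B, 0 ≤ φ (star b * b) - ε (star b) * φ b - φ (star b) * ε b) := by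
  constructor
  · intro a b c
    have hg := hφgauss (a - ε a • 1) (b - ε b • 1) (c - ε c • 1) (by simp) (by simp) (by simp)
    have hexp : (a - ε a • (1:B)) * (b - ε b • 1) * (c - ε c • 1)
        = a*(b*c) - ε c • (a*b) - ε b • (a*c) - ε a • (b*c)
          + (ε b * ε c) • a + (ε a * ε c) • b + (ε a * ε b) • c
          - (ε a * ε b * ε c) • (1:B) := by
      simp only [mul_sub, sub_mul, smul_mul_assoc, mul_smul_comm, smul_smul, one_mul,
        mul_one, mul_assoc]
      module
    rw [hexp] at hg
    simp only [map_sub, map_add, map_smul, smul_eq_mul, hφ1, mul_zero, map_mul] at hg ⊢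
    linear_combination hg
  · intro b
    have h := hφpos (b - ε b • 1) (by simp)
    have hst : star (b - ε b • (1:B)) = star b - (starRingEnd ℂ (ε b)) • 1 := by
      rw [star_sub, star_smul, star_one, Complex.star_def]
    have hexp2 : star (b - ε b • (1:B)) * (b - ε b • 1)
        = star b * b - ε b • star b - (starRingEnd ℂ (ε b)) • b
          + (starRingEnd ℂ (ε b) * ε b) • (1:B) := by
      rw [hst]
      simp only [mul_sub, sub_mul, smul_mul_assoc, mul_smul_comm, smul_smul, one_mul, mul_one]
      module
    rw [hexp2] at h
    simp only [map_sub, map_add, map_smul, smul_eq_mul, hφ1, mul_zero, add_zero] at h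
    have heq : φ (star b * b) - ε (star b) * φ b - φ (star b) * ε b
        = φ (star b * b) - ε b * φ (star b) - starRingEnd ℂ (ε b) * φ b := by
      rw [hε b]; ring
    rw [heq]
    exact h
end
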